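/- arXiv:2512.11429 — 4 statements merged into one kernel-verified Lean document; each statement's English description precedes it below -/
import Mathlib

section
/- Let A be an n×n positive semidefinite matrix, G an n×m matrix, and η > 4·λ_max(A), where λ_max(A) is the largest eigenvalue of A. Then the function F(X) = (1/2)⟨A, XXᵀ⟩ + ⟨G, X⟩ + η·∑_{i,j} |X_{ij}|^{1/2} is strongly concave on the transportation polytope F₂ = {X : 1ₙᵀX = b·1ₘᵀ, X·1ₘ = 1ₙ, 0 ≤ X ≤ 1} with modulus η/4 − λ_max(A); that is, F(tX + (1−t)Y) ≥ t·F(X) + (1−t)·F(Y) + (t(1−t)/2)(η/4 − λ_max(A))·‖Y − X‖_F² for all X, Y ∈ F₂ and t ∈ [0,1]. -/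
open Finset Matrix

lemma quad_bound {n : ℕ} {A : Matrix (Fin n) (Fin n) ℝ} (hA : A.PosSemidef) {ν : ℝ}
    (hν : IsGreatest (Set.range hA.1.eigenvalues) ν) (x : Fin n → ℝ) :
    ∑ i, ∑ k, A i k * (x i * x k) ≤ ν * ∑ i, (x i)^2 := by
  have hle : ∀ i, hA.1.eigenvalues i ≤ ν := fun i => hν.2 ⟨i, rfl⟩
  have hpsd : ((ν • (1 : Matrix (Fin n) (Fin n) ℝ)) - A).PosSemidef := by
    have hspec := hA.1.spectral_theorem
    set U : Matrix (Fin n) (Fin n) ℝ := (hA.1.eigenvectorUnitary : Matrix (Fin n) (Fin n) ℝ)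
      with hUdef
    have hU : U * Uᴴ = 1 := by
      have := (Matrix.mem_unitaryGroup_iff).mp hA.1.eigenvectorUnitary.2
      simpa [Matrix.star_eq_conjTranspose] using this
    have h1 : ν • (1 : Matrix (Fin n) (Fin n) ℝ) = U * (ν • 1) * Uᴴ := by
      rw [Matrix.mul_smul, mul_one, Matrix.smul_mul, hU]
    have h2 : (ν • (1 : Matrix (Fin n) (Fin n) ℝ)) - A
        = U * (Matrix.diagonal (fun i => ν - hA.1.eigenvalues i)) * Uᴴ := by
      rw [h1]
      conv_lhs => rw [hspec, Unitary.conjStarAlgAut_apply]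
      rw [Matrix.star_eq_conjTranspose] at *
      have h3 : (ν • (1 : Matrix (Fin n) (Fin n) ℝ))
          - Matrix.diagonal ((RCLike.ofReal : ℝ → ℝ) ∘ hA.1.eigenvalues)
          = Matrix.diagonal (fun i => ν - hA.1.eigenvalues i) := by
        rw [Matrix.smul_one_eq_diagonal, ← Matrix.diagonal_sub]
        congr 1
      rw [← h3]
      simp only [Matrix.sub_mul, Matrix.mul_sub]
      rfl
    rw [h2]
    exact (Matrix.posSemidef_diagonal_iff.mpr fun i => by
      simp only [sub_nonneg]; exact hle i).mul_mul_conjTranspose_same U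
  have h := hpsd.dotProduct_mulVec_nonneg x
  have hdot : dotProduct (star x) (((ν • (1 : Matrix (Fin n) (Fin n) ℝ)) - A) *ᵥ x)
      = ν * ∑ i, (x i)^2 - ∑ i, ∑ k, A i k * (x i * x k) := by
    simp only [Matrix.sub_mulVec, Matrix.smul_mulVec, Matrix.one_mulVec,
      dotProduct_sub, dotProduct_smul, star_trivial]
    congr 1
    · simp [dotProduct, pow_two, Finset.mul_sum, smul_eq_mul, mul_comm]
    · simp only [dotProduct, Matrix.mulVec, Finset.mul_sum]
      exact Finset.sum_congr rfl fun i _ => Finset.sum_congr rfl fun k _ => by ring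
  rw [hdot] at h
  linarith


lemma sqrt_aux (u v t : ℝ) (hu0 : 0 ≤ u) (hu1 : u ≤ 1) (hv0 : 0 ≤ v) (hv1 : v ≤ 1)
    (ht0 : 0 ≤ t) (ht1 : t ≤ 1) :
    t * u + (1 - t) * v + t * (1 - t) / 8 * (u^2 - v^2)^2
      ≤ Real.sqrt (t * u^2 + (1 - t) * v^2) := by
  have ht0' : (0:ℝ) ≤ 1 - t := by linarith
  have hs0 : 0 ≤ t * u^2 + (1 - t) * v^2 := by positivity
  have hm0 : 0 ≤ t * u + (1 - t) * v := by positivity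
  have hm1 : t * u + (1 - t) * v ≤ 1 := by nlinarith
  have hs1 : t * u^2 + (1 - t) * v^2 ≤ 1 := by nlinarith
  have hsqs : (Real.sqrt (t * u^2 + (1 - t) * v^2))^2 = t * u^2 + (1 - t) * v^2 :=
    Real.sq_sqrt hs0
  have hsq1 : Real.sqrt (t * u^2 + (1 - t) * v^2) ≤ 1 := Real.sqrt_le_one.mpr hs1
  have hsqm : t * u + (1 - t) * v ≤ Real.sqrt (t * u^2 + (1 - t) * v^2) := by
    rw [← Real.sqrt_sq hm0]
    apply Real.sqrt_le_sqrt
    nlinarith [sq_nonneg (u - v), mul_nonneg (mul_nonneg ht0 ht0') (sq_nonneg (u - v))]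
  set q := Real.sqrt (t * u^2 + (1 - t) * v^2) with hq
  have hLe : (q - (t * u + (1 - t) * v)) * (q + (t * u + (1 - t) * v))
      = t * (1 - t) * (u - v)^2 := by nlinarith [hsqs]
  have hL0 : 0 ≤ q - (t * u + (1 - t) * v) := by linarith
  have h2L : t * (1 - t) * (u - v)^2 ≤ 2 * (q - (t * u + (1 - t) * v)) := by
    nlinarith [hLe, hL0, hsq1, hm1]
  have h4 : (u + v)^2 ≤ 4 := by nlinarith
  have hnn : (0:ℝ) ≤ t * (1 - t) / 8 * (u - v)^2 := by positivity
  nlinarith [mul_le_mul_of_nonneg_left h4 hnn, h2L]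

lemma sqrt_strong_concave {x y t : ℝ} (hx0 : 0 ≤ x) (hx1 : x ≤ 1) (hy0 : 0 ≤ y) (hy1 : y ≤ 1)
    (ht0 : 0 ≤ t) (ht1 : t ≤ 1) :
    t * Real.sqrt x + (1 - t) * Real.sqrt y + t * (1 - t) / 8 * (x - y)^2
      ≤ Real.sqrt (t * x + (1 - t) * y) := by
  have h := sqrt_aux (Real.sqrt x) (Real.sqrt y) t (Real.sqrt_nonneg x)
    (Real.sqrt_le_one.mpr hx1) (Real.sqrt_nonneg y) (Real.sqrt_le_one.mpr hy1) ht0 ht1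
  rwa [Real.sq_sqrt hx0, Real.sq_sqrt hy0] at h

/-- With `η > 4 λ_max(A)`, the regularized objective `F` is strongly
concave on the transportation polytope with modulus `η/4 − λ_max(A)`. -/
theorem stmt_1 (n m : ℕ) (b : ℕ) (hb : n = m * b)
    (A : Matrix (Fin n) (Fin n) ℝ) (hA : A.PosSemidef)
    (G : Matrix (Fin n) (Fin m) ℝ) (ν η : ℝ)
    (hν : IsGreatest (Set.range hA.1.eigenvalues) ν)
    (hη : η > 4 * ν)
    (F : Matrix (Fin n) (Fin m) ℝ → ℝ)
    (hF : ∀ X, F X = (1 / 2) * ∑ i, ∑ k, A i k * (∑ j, X i j * X k j)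
        + ∑ i, ∑ j, G i j * X i j + η * ∑ i, ∑ j, Real.sqrt |X i j|) :
    ∀ X Y : Matrix (Fin n) (Fin m) ℝ,
      (∀ i, ∑ j, X i j = 1) → (∀ j, ∑ i, X i j = (b : ℝ)) →
      (∀ i j, 0 ≤ X i j ∧ X i j ≤ 1) →
      (∀ i, ∑ j, Y i j = 1) → (∀ j, ∑ i, Y i j = (b : ℝ)) →
      (∀ i j, 0 ≤ Y i j ∧ Y i j ≤ 1) →
      ∀ t : ℝ, 0 ≤ t → t ≤ 1 →
      F (t • X + (1 - t) • Y) ≥ t * F X + (1 - t) * F Y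
        + (t * (1 - t) / 2) * (η / 4 - ν) * ∑ i, ∑ j, (Y i j - X i j) ^ 2 := by
  intro X Y hX1 hX2 hXb hY1 hY2 hYb t ht0 ht1
  have ht0' : (0:ℝ) ≤ 1 - t := by linarith
  -- ν ≥ 0, η ≥ 0
  obtain ⟨⟨i0, hi0⟩, hub⟩ := hν
  have hν0 : 0 ≤ ν := hi0 ▸ hA.eigenvalues_nonneg i0
  have hη0 : 0 ≤ η := by linarith
  have hνG : IsGreatest (Set.range hA.1.eigenvalues) ν := ⟨⟨i0, hi0⟩, hub⟩
  rw [hF, hF, hF]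
  simp only [Matrix.add_apply, Matrix.smul_apply, smul_eq_mul]
  -- quadratic identity
  have hq : ∑ i, ∑ k, A i k * (∑ j, (t * X i j + (1 - t) * Y i j) * (t * X k j + (1 - t) * Y k j))
      = t * (∑ i, ∑ k, A i k * (∑ j, X i j * X k j))
        + (1 - t) * (∑ i, ∑ k, A i k * (∑ j, Y i j * Y k j))
        - t * (1 - t) * (∑ i, ∑ k, A i k * (∑ j, (X i j - Y i j) * (X k j - Y k j))) := by
    simp only [Finset.mul_sum, ← Finset.sum_add_distrib, ← Finset.sum_sub_distrib]
    exact Finset.sum_congr rfl fun i _ => Finset.sum_congr rfl fun k _ =>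
      Finset.sum_congr rfl fun j _ => by ring
  -- linear identity
  have hlin : ∑ i, ∑ j, G i j * (t * X i j + (1 - t) * Y i j)
      = t * (∑ i, ∑ j, G i j * X i j) + (1 - t) * (∑ i, ∑ j, G i j * Y i j) := by
    simp only [Finset.mul_sum, ← Finset.sum_add_distrib]
    exact Finset.sum_congr rfl fun i _ => Finset.sum_congr rfl fun j _ => by ring
  -- sqrt inequality
  have hsq : t * (∑ i, ∑ j, Real.sqrt |X i j|) + (1 - t) * (∑ i, ∑ j, Real.sqrt |Y i j|)
      + t * (1 - t) / 8 * (∑ i, ∑ j, (Y i j - X i j) ^ 2)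
      ≤ ∑ i, ∑ j, Real.sqrt |t * X i j + (1 - t) * Y i j| := by
    have pt : ∀ i j, t * Real.sqrt |X i j| + (1 - t) * Real.sqrt |Y i j|
        + t * (1 - t) / 8 * (Y i j - X i j) ^ 2
        ≤ Real.sqrt |t * X i j + (1 - t) * Y i j| := by
      intro i j
      obtain ⟨hx0, hx1⟩ := hXb i j
      obtain ⟨hy0, hy1⟩ := hYb i j
      rw [abs_of_nonneg hx0, abs_of_nonneg hy0,
        abs_of_nonneg (by positivity : (0:ℝ) ≤ t * X i j + (1 - t) * Y i j)]
      have h := sqrt_strong_concave hx0 hx1 hy0 hy1 ht0 ht1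
      have h2 : (Y i j - X i j) ^ 2 = (X i j - Y i j) ^ 2 := by ring
      rw [h2]; exact h
    calc t * (∑ i, ∑ j, Real.sqrt |X i j|) + (1 - t) * (∑ i, ∑ j, Real.sqrt |Y i j|)
          + t * (1 - t) / 8 * (∑ i, ∑ j, (Y i j - X i j) ^ 2)
        = ∑ i, ∑ j, (t * Real.sqrt |X i j| + (1 - t) * Real.sqrt |Y i j|
            + t * (1 - t) / 8 * (Y i j - X i j) ^ 2) := by
          simp only [Finset.mul_sum, ← Finset.sum_add_distrib]
      _ ≤ ∑ i, ∑ j, Real.sqrt |t * X i j + (1 - t) * Y i j| :=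
          Finset.sum_le_sum fun i _ => Finset.sum_le_sum fun j _ => pt i j
  -- quadratic bound on difference
  have hD : ∑ i, ∑ k, A i k * (∑ j, (X i j - Y i j) * (X k j - Y k j))
      ≤ ν * ∑ i, ∑ j, (Y i j - X i j) ^ 2 := by
    have hswap : ∑ i, ∑ k, A i k * (∑ j, (X i j - Y i j) * (X k j - Y k j))
        = ∑ j, ∑ i, ∑ k, A i k * ((X i j - Y i j) * (X k j - Y k j)) := by
      simp only [Finset.mul_sum]
      rw [show (∑ i, ∑ k, ∑ j, A i k * ((X i j - Y i j) * (X k j - Y k j)))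
          = ∑ i, ∑ j, ∑ k, A i k * ((X i j - Y i j) * (X k j - Y k j)) from
        Finset.sum_congr rfl fun i _ => Finset.sum_comm, Finset.sum_comm]
    rw [hswap]
    have hcol : ∀ j, ∑ i, ∑ k, A i k * ((X i j - Y i j) * (X k j - Y k j))
        ≤ ν * ∑ i, (X i j - Y i j) ^ 2 :=
      fun j => quad_bound hA hνG (fun i => X i j - Y i j)
    calc ∑ j, ∑ i, ∑ k, A i k * ((X i j - Y i j) * (X k j - Y k j))
        ≤ ∑ j, ν * ∑ i, (X i j - Y i j) ^ 2 := Finset.sum_le_sum fun j _ => hcol j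
      _ = ν * ∑ i, ∑ j, (Y i j - X i j) ^ 2 := by
          rw [← Finset.mul_sum, Finset.sum_comm]
          congr 1
          exact Finset.sum_congr rfl fun i _ => Finset.sum_congr rfl fun j _ => by ring
  rw [hq, hlin]
  have h1 := mul_le_mul_of_nonneg_left hsq hη0
  have h2 := mul_le_mul_of_nonneg_left hD (by positivity : (0:ℝ) ≤ t * (1 - t) / 2)
  nlinarith [h1, h2]
end

section
/- The limiting (Mordukhovich) subdifferential of the one-dimensional function θ(x) = η·x^{1/2} + I_{[0,1]}(x) (where I_{[0,1]} is the indicator function of [0,1], equal to 0 on [0,1] and +∞ elsewhere, and η > 0) is: ∂θ(x) = {η/(2√x)} for 0 < x < 1, ∂θ(1) = [η/2, +∞), and ∂θ(0) = ℝ. -/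
/-- The Fréchet subdifferential of `g` (with effective domain `D`, i.e. of
`g + I_D` where the indicator is `+∞` outside `D`) at a point `x ∈ D`. -/
def frechetSubdiff (D : Set ℝ) (g : ℝ → ℝ) (x : ℝ) : Set ℝ :=
  {u | x ∈ D ∧ ∀ ε > 0, ∃ δ > 0, ∀ y ∈ D, |y - x| < δ →
    g y - g x - u * (y - x) ≥ -ε * |y - x|}

/-- The limiting (Mordukhovich) subdifferential of `g + I_D` at `x ∈ D`. -/
def limitingSubdiff (D : Set ℝ) (g : ℝ → ℝ) (x : ℝ) : Set ℝ :=
  {u | ∃ xs us : ℕ → ℝ, (∀ k, us k ∈ frechetSubdiff D g (xs k)) ∧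
    Filter.Tendsto xs Filter.atTop (nhds x) ∧
    Filter.Tendsto (fun k => g (xs k)) Filter.atTop (nhds (g x)) ∧
    Filter.Tendsto us Filter.atTop (nhds u)}

open Filter

lemma sqrt_hasDeriv (η x : ℝ) (hx : 0 < x) :
    HasDerivAt (fun t => η * Real.sqrt t) (η / (2 * Real.sqrt x)) x := by
  have h := (Real.hasDerivAt_sqrt (ne_of_gt hx)).const_mul η
  rw [mul_one_div] at h
  exact h

lemma frechet_mem_deriv (η x : ℝ) (hx : 0 < x) (hx1 : x ≤ 1) :
    η / (2 * Real.sqrt x) ∈ frechetSubdiff (Set.Icc 0 1) (fun t => η * Real.sqrt t) x := by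
  refine ⟨⟨hx.le, hx1⟩, fun ε hε => ?_⟩
  have hD := (hasDerivAt_iff_isLittleO.mp (sqrt_hasDeriv η x hx)).def hε
  rw [Metric.eventually_nhds_iff] at hD
  obtain ⟨δ, hδ, hh⟩ := hD
  refine ⟨δ, hδ, fun y _ hyδ => ?_⟩
  have := hh (show dist y x < δ by rwa [Real.dist_eq])
  rw [Real.norm_eq_abs, Real.norm_eq_abs, smul_eq_mul] at this
  have h1 := neg_abs_le (η * Real.sqrt y - η * Real.sqrt x - (y - x) * (η / (2 * Real.sqrt x)))
  nlinarith [abs_nonneg (y - x)]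

lemma frechet_mem_one (η u : ℝ) (hu : η / 2 ≤ u) :
    u ∈ frechetSubdiff (Set.Icc 0 1) (fun t => η * Real.sqrt t) 1 := by
  obtain ⟨hmem, h⟩ := frechet_mem_deriv η 1 one_pos le_rfl
  refine ⟨hmem, fun ε hε => ?_⟩
  obtain ⟨δ, hδ, hh⟩ := h ε hε
  refine ⟨δ, hδ, fun y hy hyδ => ?_⟩
  have key : η * Real.sqrt y - η * Real.sqrt 1 - η / (2 * Real.sqrt 1) * (y - 1) ≥ -ε * |y - 1| :=
    hh y hy hyδ
  rw [Real.sqrt_one] at key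
  have h2 : η / (2 * 1) = η / 2 := by norm_num
  rw [h2] at key
  have h3 : (u - η / 2) * (1 - y) ≥ 0 :=
    mul_nonneg (by linarith) (by linarith [hy.2])
  show η * Real.sqrt y - η * Real.sqrt 1 - u * (y - 1) ≥ -ε * |y - 1|
  rw [Real.sqrt_one]
  nlinarith

lemma frechet_mem_zero (η : ℝ) (hη : 0 < η) (u : ℝ) :
    u ∈ frechetSubdiff (Set.Icc 0 1) (fun t => η * Real.sqrt t) 0 := by
  refine ⟨⟨le_rfl, zero_le_one⟩, fun ε hε => ?_⟩
  refine ⟨(η / (|u| + ε)) ^ 2, by positivity, fun y hy hyδ => ?_⟩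
  have hy0 : 0 ≤ y := hy.1
  rw [sub_zero, abs_of_nonneg hy0] at hyδ ⊢
  have hs : Real.sqrt y ≤ η / (|u| + ε) := by
    calc Real.sqrt y ≤ Real.sqrt ((η / (|u| + ε)) ^ 2) := Real.sqrt_le_sqrt hyδ.le
      _ = η / (|u| + ε) := Real.sqrt_sq (by positivity)
  have hmul : Real.sqrt y * (|u| + ε) ≤ η := by
    rw [le_div_iff₀ (by positivity)] at hs
    exact hs
  have hsq : Real.sqrt y ^ 2 = y := Real.sq_sqrt hy0
  have h0 : (0:ℝ) ≤ Real.sqrt y := Real.sqrt_nonneg y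
  show η * Real.sqrt y - η * Real.sqrt 0 - u * y ≥ -ε * y
  rw [Real.sqrt_zero, mul_zero, sub_zero]
  have h4 : u * y ≤ |u| * y := mul_le_mul_of_nonneg_right (le_abs_self u) hy0
  have hss : Real.sqrt y * Real.sqrt y = y := Real.mul_self_sqrt hy0
  have h5 : y * (|u| + ε) ≤ Real.sqrt y * η := by
    calc y * (|u| + ε) = Real.sqrt y * (Real.sqrt y * (|u| + ε)) := by rw [← mul_assoc, hss]
      _ ≤ Real.sqrt y * η := mul_le_mul_of_nonneg_left hmul h0
  nlinarith [h4, h5, mul_nonneg hε.le hy0]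

lemma frechet_lb (η x u : ℝ) (hη : 0 < η) (hx : 0 < x)
    (hu : u ∈ frechetSubdiff (Set.Icc 0 1) (fun t => η * Real.sqrt t) x) :
    η / (2 * Real.sqrt x) ≤ u := by
  obtain ⟨hmem, h⟩ := hu
  have hsx : 0 < Real.sqrt x := Real.sqrt_pos.2 hx
  refine le_of_forall_pos_le_add (fun ε hε => ?_)
  obtain ⟨δ, hδ, hh⟩ := h ε hε
  set y := x - min δ x / 2 with hydef
  have hmin : 0 < min δ x := lt_min hδ hx
  have hy0 : 0 < y := by
    have : min δ x ≤ x := min_le_right _ _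
    simp only [hydef]; linarith
  have hyx : y < x := by simp only [hydef]; linarith
  have hy1 : y ≤ 1 := hyx.le.trans hmem.2
  have hyd : |y - x| < δ := by
    have h1 : y - x = -(min δ x / 2) := by simp only [hydef]; ring
    rw [h1, abs_neg, abs_of_nonneg (by linarith)]
    have : min δ x ≤ δ := min_le_left _ _
    linarith
  have key : η * Real.sqrt y - η * Real.sqrt x - u * (y - x) ≥ -ε * |y - x| :=
    hh y ⟨hy0.le, hy1⟩ hyd
  rw [abs_of_nonpos (by linarith)] at key
  have hslt : Real.sqrt y < Real.sqrt x := Real.sqrt_lt_sqrt hy0.le hyx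
  have hsy : 0 < Real.sqrt y := Real.sqrt_pos.2 hy0
  have hsqx : Real.sqrt x ^ 2 = x := Real.sq_sqrt hx.le
  have hsqy : Real.sqrt y ^ 2 = y := Real.sq_sqrt hy0.le
  have heq : (Real.sqrt x - Real.sqrt y) * ((u + ε) * (Real.sqrt x + Real.sqrt y) - η)
      = η * Real.sqrt y - η * Real.sqrt x - u * (y - x) - ε * (y - x) := by
    linear_combination (u + ε) * hsqx - (u + ε) * hsqy
  have h2 : 0 ≤ (Real.sqrt x - Real.sqrt y) * ((u + ε) * (Real.sqrt x + Real.sqrt y) - η) := by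
    rw [heq]; linarith
  have h1 : η ≤ (u + ε) * (Real.sqrt x + Real.sqrt y) := by
    have := (mul_nonneg_iff_of_pos_left (sub_pos.2 hslt)).mp h2
    linarith
  have hup : 0 ≤ u + ε := by nlinarith
  rw [div_le_iff₀ (by positivity)]
  nlinarith [mul_le_mul_of_nonneg_left hslt.le hup]

lemma frechet_ub (η x u : ℝ) (hη : 0 < η) (hx : 0 < x) (hx1 : x < 1)
    (hu : u ∈ frechetSubdiff (Set.Icc 0 1) (fun t => η * Real.sqrt t) x) :
    u ≤ η / (2 * Real.sqrt x) := by
  obtain ⟨hmem, h⟩ := hu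
  have hsx : 0 < Real.sqrt x := Real.sqrt_pos.2 hx
  refine le_of_forall_pos_le_add (fun ε hε => ?_)
  obtain ⟨δ, hδ, hh⟩ := h ε hε
  set y := x + min δ (1 - x) / 2 with hydef
  have hmin : 0 < min δ (1 - x) := lt_min hδ (by linarith)
  have hyx : x < y := by simp only [hydef]; linarith
  have hy0 : 0 < y := hx.trans hyx
  have hy1 : y ≤ 1 := by
    have : min δ (1 - x) ≤ 1 - x := min_le_right _ _
    simp only [hydef]; linarith
  have hyd : |y - x| < δ := by
    have h1 : y - x = min δ (1 - x) / 2 := by simp only [hydef]; ring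
    rw [h1, abs_of_nonneg (by linarith)]
    have : min δ (1 - x) ≤ δ := min_le_left _ _
    linarith
  have key : η * Real.sqrt y - η * Real.sqrt x - u * (y - x) ≥ -ε * |y - x| :=
    hh y ⟨hy0.le, hy1⟩ hyd
  rw [abs_of_nonneg (by linarith)] at key
  have hslt : Real.sqrt x < Real.sqrt y := Real.sqrt_lt_sqrt hx.le hyx
  have hsqx : Real.sqrt x ^ 2 = x := Real.sq_sqrt hx.le
  have hsqy : Real.sqrt y ^ 2 = y := Real.sq_sqrt hy0.le
  have heq : (Real.sqrt y - Real.sqrt x) * (η - (u - ε) * (Real.sqrt x + Real.sqrt y))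
      = η * Real.sqrt y - η * Real.sqrt x - u * (y - x) + ε * (y - x) := by
    linear_combination (u - ε) * hsqx + (ε - u) * hsqy
  have h2 : 0 ≤ (Real.sqrt y - Real.sqrt x) * (η - (u - ε) * (Real.sqrt x + Real.sqrt y)) := by
    rw [heq]; linarith
  have h1 : (u - ε) * (Real.sqrt x + Real.sqrt y) ≤ η := by
    have := (mul_nonneg_iff_of_pos_left (sub_pos.2 hslt)).mp h2
    linarith
  rcases le_or_gt u ε with hc | hc
  · have : 0 < η / (2 * Real.sqrt x) := by positivity
    linarith
  · rw [← sub_le_iff_le_add, le_div_iff₀ (by positivity)]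
    nlinarith [mul_le_mul_of_nonneg_left hslt.le (by linarith : (0:ℝ) ≤ u - ε)]

lemma lim_tendsto (η x : ℝ) (hx : 0 < x) {xs : ℕ → ℝ}
    (hxs : Tendsto xs atTop (nhds x)) :
    Tendsto (fun k => η / (2 * Real.sqrt (xs k))) atTop (nhds (η / (2 * Real.sqrt x))) := by
  have h1 : Tendsto (fun k => Real.sqrt (xs k)) atTop (nhds (Real.sqrt x)) :=
    (Real.continuous_sqrt.tendsto x).comp hxs
  exact tendsto_const_nhds.div (h1.const_mul 2)
    (by positivity)

/-- the limiting subdifferential of `θ(x) = η √x + I_{[0,1]}(x)`: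
`{η/(2√x)}` on `(0,1)`, `[η/2, ∞)` at `1`, all of `ℝ` at `0`. -/
theorem stmt_8 (η : ℝ) (hη : 0 < η) :
    (∀ x : ℝ, 0 < x → x < 1 →
      limitingSubdiff (Set.Icc 0 1) (fun t => η * Real.sqrt t) x
        = {η / (2 * Real.sqrt x)}) ∧
    limitingSubdiff (Set.Icc 0 1) (fun t => η * Real.sqrt t) 1 = Set.Ici (η / 2) ∧
    limitingSubdiff (Set.Icc 0 1) (fun t => η * Real.sqrt t) 0 = Set.univ := by
  refine ⟨?_, ?_, ?_⟩
  · intro x hx0 hx1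
    ext u
    simp only [Set.mem_singleton_iff]
    constructor
    · rintro ⟨xs, us, hF, hxs, hgs, hus⟩
      have hev : ∀ᶠ k in atTop, xs k ∈ Set.Ioo (0:ℝ) 1 :=
        hxs (Ioo_mem_nhds hx0 hx1)
      have hev2 : ∀ᶠ k in atTop, us k = η / (2 * Real.sqrt (xs k)) := by
        filter_upwards [hev] with k hk
        exact le_antisymm (frechet_ub η (xs k) (us k) hη hk.1 hk.2 (hF k))
          (frechet_lb η (xs k) (us k) hη hk.1 (hF k))
      exact tendsto_nhds_unique (hus.congr' hev2) (lim_tendsto η x hx0 hxs)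
    · intro hu
      subst hu
      exact ⟨fun _ => x, fun _ => η / (2 * Real.sqrt x),
        fun _ => frechet_mem_deriv η x hx0 hx1.le,
        tendsto_const_nhds, tendsto_const_nhds, tendsto_const_nhds⟩
  · ext u
    simp only [Set.mem_Ici]
    constructor
    · rintro ⟨xs, us, hF, hxs, hgs, hus⟩
      have hev : ∀ᶠ k in atTop, 0 < xs k := hxs (Ioi_mem_nhds one_pos)
      have hev2 : ∀ᶠ k in atTop, η / (2 * Real.sqrt (xs k)) ≤ us k := by
        filter_upwards [hev] with k hk
        exact frechet_lb η (xs k) (us k) hη hk (hF k)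
      have := le_of_tendsto_of_tendsto (lim_tendsto η 1 one_pos hxs) hus hev2
      rwa [Real.sqrt_one, mul_one] at this
    · intro hu
      exact ⟨fun _ => 1, fun _ => u, fun _ => frechet_mem_one η u hu,
        tendsto_const_nhds, tendsto_const_nhds, tendsto_const_nhds⟩
  · refine Set.eq_univ_iff_forall.2 fun u => ?_
    exact ⟨fun _ => 0, fun _ => u, fun _ => frechet_mem_zero η hη u,
      tendsto_const_nhds, tendsto_const_nhds, tendsto_const_nhds⟩
end

section
/- Given B ∈ ℝ^{n×m} and positive integers n, m with b = n/m ∈ ℕ, the matrix Y* = B − (1/n)·1ₙ1ₙᵀB + (1/m)·(1ₙ − B1ₘ + (1/n)·1ₙ1ₙᵀB1ₘ)·1ₘᵀ is the unique solution of the problem min_Y (1/2)‖Y − B‖_F² subject to 1ₙᵀY = b·1ₘᵀ and Y·1ₘ = 1ₙ; i.e., Y* is the orthogonal projection of B onto the affine set {Y : 1ₙᵀY = b·1ₘᵀ, Y·1ₘ = 1ₙ}. -/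
/-!
`Y* − B` has the form `a i + d j`, a sum of a row term and a column term, and such matrices are
orthogonal to every matrix with zero row and column sums, i.e. to `Y − Y*` for every feasible
`Y` once `Y*` is shown to be feasible. Pythagoras then gives
`‖Y − B‖² = ‖Y* − B‖² + ‖Y − Y*‖²`.
-/

open Finset

section RowColumnDecomposition

variable {ι κ R : Type*} [Fintype ι] [Fintype κ]

theorem sum_sum_add_mul_eq_zero [CommRing R] (a : ι → R) (d : κ → R) (E : Matrix ι κ R)
    (hrow : ∀ i, ∑ j, E i j = 0) (hcol : ∀ j, ∑ i, E i j = 0) :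
    ∑ i, ∑ j, (a i + d j) * E i j = 0 := by
  simp only [add_mul, sum_add_distrib, ← mul_sum, hrow, mul_zero, zero_add]
  rw [sum_comm]
  simp only [← mul_sum, hcol, mul_zero, sum_const_zero]

theorem sum_sum_sq_sub_eq_add [CommRing R] {B Y Z : Matrix ι κ R} (a : ι → R) (d : κ → R)
    (hZ : ∀ i j, Z i j - B i j = a i + d j)
    (hrow : ∀ i, ∑ j, Y i j = ∑ j, Z i j) (hcol : ∀ j, ∑ i, Y i j = ∑ i, Z i j) :
    ∑ i, ∑ j, (Y i j - B i j) ^ 2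
      = ∑ i, ∑ j, (Z i j - B i j) ^ 2 + ∑ i, ∑ j, (Y i j - Z i j) ^ 2 := by
  have cross : ∑ i, ∑ j, (a i + d j) * (Y i j - Z i j) = 0 :=
    sum_sum_add_mul_eq_zero a d (Y - Z)
      (fun i => by simp [sum_sub_distrib, hrow i]) (fun j => by simp [sum_sub_distrib, hcol j])
  calc ∑ i, ∑ j, (Y i j - B i j) ^ 2
      = ∑ i, ∑ j, ((Z i j - B i j) ^ 2 + (Y i j - Z i j) ^ 2
          + 2 * ((a i + d j) * (Y i j - Z i j))) := by
        refine sum_congr rfl fun i _ => sum_congr rfl fun j _ => ?_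
        rw [← hZ]; ring
    _ = _ := by simp only [sum_add_distrib, ← mul_sum, cross, mul_zero, add_zero]

theorem sum_sum_sq_sub_pos_of_ne {Y Z : Matrix ι κ ℝ} (h : Y ≠ Z) :
    0 < ∑ i, ∑ j, (Y i j - Z i j) ^ 2 := by
  obtain ⟨i, j, hij⟩ : ∃ i j, Y i j ≠ Z i j := by
    by_contra! h'
    exact h (Matrix.ext h')
  exact sum_pos' (fun i _ => sum_nonneg fun j _ => sq_nonneg _)
    ⟨i, mem_univ i, sum_pos' (fun j _ => sq_nonneg _)
      ⟨j, mem_univ j, sq_pos_of_ne_zero (sub_ne_zero.mpr hij)⟩⟩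

end RowColumnDecomposition

section AffineProjection

variable {ι κ : Type*} [Fintype ι] [Fintype κ]

noncomputable def affineProjection (B : Matrix ι κ ℝ) : Matrix ι κ ℝ := fun i j =>
  B i j - (1 / (Fintype.card ι : ℝ)) * ∑ i', B i' j
    + (1 / (Fintype.card κ : ℝ))
      * (1 - ∑ j', B i j' + (1 / (Fintype.card ι : ℝ)) * ∑ i', ∑ j', B i' j')

theorem affineProjection_sub (B : Matrix ι κ ℝ) (i : ι) (j : κ) :
    affineProjection B i j - B i j
      = (1 / (Fintype.card κ : ℝ))
          * (1 - ∑ j', B i j' + (1 / (Fintype.card ι : ℝ)) * ∑ i', ∑ j', B i' j')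
        + -(1 / (Fintype.card ι : ℝ)) * ∑ i', B i' j := by
  rw [affineProjection]; ring

theorem sum_affineProjection_col [Nonempty ι] (B : Matrix ι κ ℝ) (j : κ) :
    ∑ i, affineProjection B i j = Fintype.card ι / Fintype.card κ := by
  have hι : (Fintype.card ι : ℝ) ≠ 0 := Nat.cast_ne_zero.mpr Fintype.card_ne_zero
  simp only [affineProjection, sum_add_distrib, sum_sub_distrib, ← mul_sum, sum_const,
    card_univ, nsmul_eq_mul]
  field_simp
  ring

theorem sum_affineProjection_row [Nonempty κ] (B : Matrix ι κ ℝ) (i : ι) :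
    ∑ j, affineProjection B i j = 1 := by
  have hκ : (Fintype.card κ : ℝ) ≠ 0 := Nat.cast_ne_zero.mpr Fintype.card_ne_zero
  simp only [affineProjection, sum_add_distrib, sum_sub_distrib, ← mul_sum, sum_const,
    card_univ, nsmul_eq_mul]
  rw [sum_comm (f := fun i' j => B i' j)]
  field_simp
  ring

end AffineProjection

/-- explicit formula for the orthogonal projection of `B` onto the
affine set `{Y : 1ₙᵀY = b·1ₘᵀ, Y·1ₘ = 1ₙ}`: `Y*` is feasible and is the unique
minimizer of the Frobenius distance to `B`. -/
theorem stmt_12 (n m : ℕ) (hn : 0 < n) (hm : 0 < m) (b : ℕ) (hb : n = m * b)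
    (B : Matrix (Fin n) (Fin m) ℝ)
    (Ystar : Matrix (Fin n) (Fin m) ℝ)
    (hY : ∀ i j, Ystar i j
      = B i j - (1 / (n : ℝ)) * ∑ i', B i' j
        + (1 / (m : ℝ)) * (1 - ∑ j', B i j' + (1 / (n : ℝ)) * ∑ i', ∑ j', B i' j')) :
    ((∀ j, ∑ i, Ystar i j = (b : ℝ)) ∧ (∀ i, ∑ j, Ystar i j = 1)) ∧
    ∀ Y : Matrix (Fin n) (Fin m) ℝ,
      (∀ j, ∑ i, Y i j = (b : ℝ)) → (∀ i, ∑ j, Y i j = 1) →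
      (∑ i, ∑ j, (Ystar i j - B i j) ^ 2 ≤ ∑ i, ∑ j, (Y i j - B i j) ^ 2) ∧
      (Y ≠ Ystar → ∑ i, ∑ j, (Ystar i j - B i j) ^ 2 < ∑ i, ∑ j, (Y i j - B i j) ^ 2) := by
  have : NeZero n := ⟨hn.ne'⟩
  have : NeZero m := ⟨hm.ne'⟩
  obtain rfl : Ystar = affineProjection B := by
    ext i j
    simp only [hY, affineProjection, Fintype.card_fin]
  have hcol : ∀ j, ∑ i, affineProjection B i j = b := fun j => by
    rw [sum_affineProjection_col, Fintype.card_fin, Fintype.card_fin, hb, Nat.cast_mul,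
      mul_div_cancel_left₀ _ (Nat.cast_ne_zero.mpr hm.ne')]
  have hrow := sum_affineProjection_row B
  refine ⟨⟨hcol, hrow⟩, fun Y hYcol hYrow => ?_⟩
  have hpyth := sum_sum_sq_sub_eq_add _ _ (affineProjection_sub B)
    (fun i => (hYrow i).trans (hrow i).symm) (fun j => (hYcol j).trans (hcol j).symm)
  rw [hpyth]
  exact ⟨le_add_of_nonneg_right (sum_nonneg fun i _ => sum_nonneg fun j _ => sq_nonneg _),
    fun hne => lt_add_of_pos_right _ (sum_sum_sq_sub_pos_of_ne hne)⟩
end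

section
/- Let η > 4‖A‖_∞. Then the binary problem min_{X∈F₁} (1/2)⟨A,XXᵀ⟩ + ⟨G,X⟩ and the regularized relaxed problem min_{X∈F₂} (1/2)⟨A,XXᵀ⟩ + ⟨G,X⟩ + η‖X‖_{1/2}^{1/2} have the same set of global minimizers. -/
lemma next_frac {m : ℕ} (r : Fin m → ℝ) (h01 : ∀ j, 0 ≤ r j ∧ r j ≤ 1) (c : ℕ)
    (hsum : ∑ j, r j = (c : ℝ)) (j : Fin m) (hj0 : 0 < r j) (hj1 : r j < 1) :
    ∃ j', j' ≠ j ∧ 0 < r j' ∧ r j' < 1 := by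
  by_contra h
  push_neg at h
  have hint : ∀ j' ∈ Finset.univ.erase j, r j' = 0 ∨ r j' = 1 := by
    intro j' hj'
    rcases eq_or_lt_of_le (h01 j').1 with h0 | h0
    · exact Or.inl h0.symm
    rcases eq_or_lt_of_le (h01 j').2 with h1 | h1
    · exact Or.inr h1
    exact absurd h1 (not_lt.2 (by simpa using (h j' (Finset.ne_of_mem_erase hj') h0)))
  classical
  set T := (Finset.univ.erase j).filter (fun j' => r j' = 1) with hT
  have hsplit : ∑ j' ∈ Finset.univ.erase j, r j' = (T.card : ℝ) := by
    rw [← Finset.sum_filter_add_sum_filter_not (Finset.univ.erase j) (fun j' => r j' = 1)]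
    have h1 : ∑ j' ∈ T, r j' = (T.card : ℝ) := by
      rw [Finset.sum_congr rfl (fun j' hj' => (Finset.mem_filter.1 hj').2)]
      simp [hT]
    have h2 : ∑ j' ∈ (Finset.univ.erase j).filter (fun j' => ¬ r j' = 1), r j' = 0 := by
      apply Finset.sum_eq_zero
      intro j' hj'
      rcases hint j' (Finset.mem_of_mem_filter _ hj') with h0 | h0
      · exact h0
      · exact absurd h0 (Finset.mem_filter.1 hj').2
    rw [h1, h2, add_zero]
  have hall : r j + (T.card : ℝ) = (c : ℝ) := by
    rw [← hsplit, ← hsum, Finset.add_sum_erase _ _ (Finset.mem_univ j)]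
  have h1 : (T.card : ℝ) < c := by linarith
  have h2 : (c : ℝ) < T.card + 1 := by linarith
  have h1' : T.card < c := by exact_mod_cast h1
  have h2' : c < T.card + 1 := by exact_mod_cast h2
  omega

lemma sqrt_gain (x t : ℝ) (ht : 0 < t) (hx : t ≤ x) :
    t^2 / (4 * ((x+t) * Real.sqrt (x+t))) ≤ 2 * Real.sqrt x - Real.sqrt (x - t) - Real.sqrt (x + t) := by
  set a := Real.sqrt (x - t) with ha
  set bb := Real.sqrt x with hb
  set c := Real.sqrt (x + t) with hc
  have hxt0 : (0:ℝ) ≤ x - t := by linarith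
  have ha2 : a ^ 2 = x - t := Real.sq_sqrt hxt0
  have hb2 : bb ^ 2 = x := Real.sq_sqrt (by linarith)
  have hc2 : c ^ 2 = x + t := Real.sq_sqrt (by linarith)
  have ha0 : 0 ≤ a := Real.sqrt_nonneg _
  have hb0 : 0 < bb := Real.sqrt_pos.2 (by linarith)
  have hc0 : 0 < c := Real.sqrt_pos.2 (by linarith)
  have hab : a ≤ bb := Real.sqrt_le_sqrt (by linarith)
  have hbc : bb ≤ c := Real.sqrt_le_sqrt (by linarith)
  have hP : (0:ℝ) < (a + bb) * (bb + c) * (a + c) := by positivity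
  have hiden : (2 * bb - a - c) * ((a + bb) * (bb + c) * (a + c)) = 2 * t^2 := by
    have h1 : bb ^ 2 - a ^ 2 = t := by rw [ha2, hb2]; ring
    have h2 : c ^ 2 - bb ^ 2 = t := by rw [hb2, hc2]; ring
    linear_combination ((bb + c) * (a + c)) * h1 - ((a + bb) * (a + c)) * h2 + t * h1 + t * h2
  have hpos : 0 ≤ 2 * bb - a - c := by
    by_contra hneg
    push_neg at hneg
    nlinarith
  have hxt : (0:ℝ) < x + t := by linarith
  have hPle : (a + bb) * (bb + c) * (a + c) ≤ 8 * ((x + t) * c) := by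
    have e1 : a + bb ≤ 2 * c := by linarith
    have e2 : bb + c ≤ 2 * c := by linarith
    have e3 : a + c ≤ 2 * c := by linarith
    have : (a + bb) * (bb + c) * (a + c) ≤ (2*c) * (2*c) * (2*c) := by
      apply mul_le_mul (mul_le_mul e1 e2 (by linarith) (by linarith)) e3 (by linarith) (by positivity)
    calc (a + bb) * (bb + c) * (a + c) ≤ (2*c)*(2*c)*(2*c) := this
      _ = 8 * (c^2 * c) := by ring
      _ = 8 * ((x+t) * c) := by rw [hc2]
  rw [div_le_iff₀ (by positivity)]
  have := mul_le_mul_of_nonneg_left hPle hpos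
  linarith

lemma pair_gain (x y t : ℝ) (ht : 0 < t) (hx : t ≤ x) (hy : t ≤ y) (hxy : x + y ≤ 1)
    (ht16 : t ≤ 1/16) :
    (Real.sqrt (x+t) + Real.sqrt (x-t) - 2 * Real.sqrt x)
      + (Real.sqrt (y+t) + Real.sqrt (y-t) - 2 * Real.sqrt y) < -(t^2) := by
  have hu : (0:ℝ) < x + t := by linarith
  have hv : (0:ℝ) < y + t := by linarith
  have g1 := sqrt_gain x t ht hx
  have g2 := sqrt_gain y t ht hy
  set u := x + t with hu'
  set v := y + t with hv'
  set p := u * Real.sqrt u with hp'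
  set q := v * Real.sqrt v with hq'
  clear_value u v p q
  have hp : 0 < p := by rw [hp']; have := Real.sqrt_pos.2 hu; positivity
  have hq : 0 < q := by rw [hq']; have := Real.sqrt_pos.2 hv; positivity
  have hpq : 0 < p * q := mul_pos hp hq
  have hpqeq : p * q = (u*v) * Real.sqrt (u*v) := by
    rw [hp', hq', Real.sqrt_mul hu.le]; ring
  have hsum : u + v ≤ 9/8 := by rw [hu', hv']; linarith
  have huv : u * v ≤ 81/256 := by
    nlinarith [sq_nonneg (u - v), mul_le_mul hsum hsum (by positivity) (by norm_num)]
  have hsuv : Real.sqrt (u*v) ≤ 9/16 := by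
    have h := Real.sqrt_le_sqrt huv
    have h9 : Real.sqrt (81/256) = 9/16 := by
      rw [show (81:ℝ)/256 = (9/16)^2 by norm_num, Real.sqrt_sq (by norm_num)]
    linarith
  have hpqle : p * q ≤ 729/4096 := by
    rw [hpqeq]
    have h0 : 0 ≤ u * v := by positivity
    have h0' : 0 ≤ Real.sqrt (u*v) := Real.sqrt_nonneg _
    nlinarith
  have hspq : Real.sqrt (p*q) ≤ 27/64 := by
    have h := Real.sqrt_le_sqrt hpqle
    have h27 : Real.sqrt (729/4096) = 27/64 := by
      rw [show (729:ℝ)/4096 = (27/64)^2 by norm_num, Real.sqrt_sq (by norm_num)]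
    linarith
  have hs0 : 0 < Real.sqrt (p*q) := Real.sqrt_pos.2 hpq
  have hge : 2 / Real.sqrt (p*q) ≤ 1/p + 1/q := by
    rw [div_add_div _ _ (ne_of_gt hp) (ne_of_gt hq), div_le_div_iff₀ hs0 hpq]
    have h1 : Real.sqrt (p*q) * Real.sqrt (p*q) = p * q := Real.mul_self_sqrt hpq.le
    have h2 : Real.sqrt p * Real.sqrt q = Real.sqrt (p*q) := (Real.sqrt_mul hp.le q).symm
    nlinarith [sq_nonneg (Real.sqrt p - Real.sqrt q), Real.sq_sqrt hp.le, Real.sq_sqrt hq.le,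
      Real.sqrt_nonneg (p*q)]
  have hge2 : (128:ℝ)/27 ≤ 2 / Real.sqrt (p*q) := by
    rw [div_le_div_iff₀ (by norm_num) hs0]
    linarith
  have hbig : (4:ℝ) < 1/p + 1/q := by
    have : (4:ℝ) < 128/27 := by norm_num
    linarith
  have e1 : t^2 < t^2/(4*p) + t^2/(4*q) := by
    have key : ∀ r : ℝ, 0 < r → t^2/(4*r) = (t^2/4)*(1/r) := by
      intro r hr; field_simp
    rw [key p hp, key q hq, ← mul_add]
    calc t^2 = (t^2/4) * 4 := by ring
      _ < (t^2/4) * (1/p + 1/q) := by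
          apply mul_lt_mul_of_pos_left hbig (by positivity)
  linarith [g1, g2, e1]

lemma sum_comb {β : Type*} [Fintype β] (F1 F2 F3 F4 : β → ℝ) (c : ℝ)
    (h : ∀ b, F1 b + F2 b - 2 * F3 b = c * F4 b) :
    (∑ b, F1 b) + (∑ b, F2 b) - 2*(∑ b, F3 b) = c * (∑ b, F4 b) := by
  rw [Finset.mul_sum, Finset.mul_sum, ← Finset.sum_add_distrib, ← Finset.sum_sub_distrib]
  exact Finset.sum_congr rfl (fun b _ => h b)

lemma delta_sum {β : Type*} [Fintype β] [DecidableEq β] (a b : β) :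
    ∑ j, (if j = a then (1:ℝ) else 0) * (if j = b then 1 else 0) = if a = b then 1 else 0 := by
  simp only [ite_mul, one_mul, zero_mul, Finset.sum_ite_eq', Finset.mem_univ, if_true]

open Classical in
private noncomputable def cycwalk {n m : ℕ} (P : Fin n → Fin m → Prop)
    (hrow : ∀ i j, P i j → ∃ j', j' ≠ j ∧ P i j')
    (hcol : ∀ i j, P i j → ∃ i', i' ≠ i ∧ P i' j)
    (q₀ : Fin n × Fin m) : ℕ → Fin n × Fin m :=
  fun t => Nat.rec q₀ (fun t ih =>
    if ht : P ih.1 ih.2 then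
      (if t % 2 = 0 then (ih.1, Classical.choose (hrow ih.1 ih.2 ht))
       else (Classical.choose (hcol ih.1 ih.2 ht), ih.2))
    else ih) t

lemma exists_cycle {n m : ℕ} (P : Fin n → Fin m → Prop)
    (hrow : ∀ i j, P i j → ∃ j', j' ≠ j ∧ P i j')
    (hcol : ∀ i j, P i j → ∃ i', i' ≠ i ∧ P i' j)
    (i₀ : Fin n) (j₀ : Fin m) (h₀ : P i₀ j₀) :
    ∃ (N : ℕ), 2 ≤ N ∧ ∃ (R : ZMod N → Fin n) (C : ZMod N → Fin m),
      Function.Injective R ∧ Function.Injective C ∧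
      ∀ s, P (R s) (C s) ∧ P (R s) (C (s+1)) := by
  classical
  set w := cycwalk P hrow hcol (i₀, j₀) with hw
  have hstep : ∀ t, w (t+1) = (if ht : P (w t).1 (w t).2 then
      (if t % 2 = 0 then ((w t).1, Classical.choose (hrow (w t).1 (w t).2 ht))
       else (Classical.choose (hcol (w t).1 (w t).2 ht), (w t).2))
    else (w t)) := fun t => rfl
  have hP : ∀ t, P (w t).1 (w t).2 := by
    intro t
    induction t with
    | zero => exact h₀
    | succ t ih =>
      rw [hstep t, dif_pos ih]
      by_cases he : t % 2 = 0
      · rw [if_pos he]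
        exact (Classical.choose_spec (hrow (w t).1 (w t).2 ih)).2
      · rw [if_neg he]
        exact (Classical.choose_spec (hcol (w t).1 (w t).2 ih)).2
  have heven : ∀ t, t % 2 = 0 → (w (t+1)).1 = (w t).1 ∧ (w (t+1)).2 ≠ (w t).2 := by
    intro t ht
    rw [hstep t, dif_pos (hP t), if_pos ht]
    exact ⟨rfl, (Classical.choose_spec (hrow (w t).1 (w t).2 (hP t))).1⟩
  have hodd : ∀ t, t % 2 = 1 → (w (t+1)).2 = (w t).2 ∧ (w (t+1)).1 ≠ (w t).1 := by
    intro t ht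
    rw [hstep t, dif_pos (hP t), if_neg (by omega : ¬ t % 2 = 0)]
    exact ⟨rfl, (Classical.choose_spec (hcol (w t).1 (w t).2 (hP t))).1⟩
  set v : ℕ → Fin n ⊕ Fin m := fun t => if t % 2 = 0 then .inl (w t).1 else .inr (w t).2 with hv
  -- a repeat exists
  have hex : ∃ l, ∃ k, k < l ∧ v k = v l := by
    obtain ⟨x, y, hxy, hvxy⟩ := Finite.exists_ne_map_eq_of_infinite v
    rcases lt_or_gt_of_ne hxy with h | h
    · exact ⟨y, x, h, hvxy⟩
    · exact ⟨x, y, h, hvxy.symm⟩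
  set l := Nat.find hex with hl
  obtain ⟨k, hkl, hvkl⟩ : ∃ k, k < l ∧ v k = v l := Nat.find_spec hex
  have hinj : ∀ a b, a < b → b < l → v a ≠ v b := by
    intro a b hab hbl h
    exact Nat.find_min hex hbl ⟨a, hab, h⟩
  -- parities of k and l agree
  have hpar : k % 2 = l % 2 := by
    by_cases hk : k % 2 = 0 <;> by_cases hl2 : l % 2 = 0
    · omega
    · exfalso; simp [hv, hk, hl2] at hvkl
    · exfalso; simp [hv, hk, hl2] at hvkl
    · omega
  have hne2 : l ≠ k + 2 := by
    intro h
    rw [h] at hvkl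
    by_cases hk : k % 2 = 0
    · have h1 := (heven k hk).1
      have h2 := (hodd (k+1) (by omega)).2
      rw [h1] at h2
      apply h2
      have : (k+1)+1 = k + 2 := by omega
      rw [this]
      simp only [hv, if_pos hk, if_pos (by omega : (k+2) % 2 = 0)] at hvkl
      exact (Sum.inl_injective hvkl).symm
    · have h1 := (hodd k (by omega)).1
      have h2 := (heven (k+1) (by omega)).2
      rw [h1] at h2
      apply h2
      have : (k+1)+1 = k + 2 := by omega
      rw [this]
      simp only [hv, if_neg hk, if_neg (by omega : ¬ (k+2) % 2 = 0)] at hvkl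
      exact (Sum.inr_injective hvkl).symm
  obtain ⟨N, hN2, hlkN⟩ : ∃ N, 2 ≤ N ∧ l = k + 2*N := ⟨(l-k)/2, by omega, by omega⟩
  haveI : NeZero N := ⟨by omega⟩
  haveI : Fact (1 < N) := ⟨by omega⟩
  have hval : ∀ u : ZMod N, u.val < N := fun u => ZMod.val_lt u
  have hsucc : ∀ u : ZMod N, (u+1).val = (u.val + 1) % N := by
    intro u; rw [ZMod.val_add, ZMod.val_one]
  refine ⟨N, hN2, ?_⟩
  by_cases hk : k % 2 = 0
  · -- k even : rows at even indices
    have hleven : l % 2 = 0 := by omega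
    have hwkl1 : (w k).1 = (w l).1 := by
      simp only [hv, if_pos hk, if_pos hleven] at hvkl
      exact Sum.inl_injective hvkl
    set R : ZMod N → Fin n := fun u => (w (k + 2*u.val)).1 with hR
    set Cc : ZMod N → Fin m := fun u => (w (k + 2*u.val + 1)).2 with hC
    have hvR : ∀ u : ZMod N, v (k + 2*u.val) = Sum.inl (R u) := by
      intro u; simp only [hv, hR]; rw [if_pos (by omega)]
    have hvC : ∀ u : ZMod N, v (k + 2*u.val + 1) = Sum.inr (Cc u) := by
      intro u; simp only [hv, hC]; rw [if_neg (by omega)]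
    have injR : Function.Injective R := by
      intro u u' h
      by_contra hne
      have hvv : u.val ≠ u'.val := fun hh => hne (ZMod.val_injective N hh)
      have b1 := hval u; have b2 := hval u'
      rcases lt_or_gt_of_ne hvv with hlt | hlt
      · exact hinj (k+2*u.val) (k+2*u'.val) (by omega) (by omega)
          (by rw [hvR u, hvR u', h])
      · exact hinj (k+2*u'.val) (k+2*u.val) (by omega) (by omega)
          (by rw [hvR u, hvR u', h])
    have injC : Function.Injective Cc := by
      intro u u' h
      by_contra hne
      have hvv : u.val ≠ u'.val := fun hh => hne (ZMod.val_injective N hh)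
      have b1 := hval u; have b2 := hval u'
      rcases lt_or_gt_of_ne hvv with hlt | hlt
      · exact hinj (k+2*u.val+1) (k+2*u'.val+1) (by omega) (by omega)
          (by rw [hvC u, hvC u', h])
      · exact hinj (k+2*u'.val+1) (k+2*u.val+1) (by omega) (by omega)
          (by rw [hvC u, hvC u', h])
    have e1 : ∀ u, P (R u) (Cc u) := by
      intro u
      have hp := hP (k + 2*u.val + 1)
      have hr : (w (k + 2*u.val + 1)).1 = (w (k + 2*u.val)).1 := (heven _ (by omega)).1
      rw [hr] at hp
      exact hp
    have e2 : ∀ u, P (R (u+1)) (Cc u) := by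
      intro u
      have hp := hP (k + 2*u.val + 2)
      have hc : (w (k + 2*u.val + 2)).2 = (w (k + 2*u.val + 1)).2 :=
        (hodd _ (by omega)).1
      rw [hc] at hp
      have hrow1 : R (u+1) = (w (k + 2*u.val + 2)).1 := by
        by_cases hun : u.val + 1 < N
        · have hv1 : (u+1).val = u.val + 1 := by rw [hsucc, Nat.mod_eq_of_lt hun]
          show (w (k + 2*(u+1).val)).1 = _
          rw [hv1, show k + 2*(u.val+1) = k + 2*u.val + 2 by ring]
        · have hu : u.val + 1 = N := by have := hval u; omega
          have hv0 : (u+1).val = 0 := by rw [hsucc, hu, Nat.mod_self]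
          show (w (k + 2*(u+1).val)).1 = _
          rw [hv0, show k + 2*0 = k by ring, hwkl1,
            show k + 2*u.val + 2 = l by omega]
      rw [hrow1]
      exact hp
    refine ⟨R, fun u => Cc (u - 1), injR, ?_, ?_⟩
    · intro u u' h
      have := injC h
      have h2 := congrArg (· + 1) this
      simpa [sub_add_cancel] using h2
    · intro s
      constructor
      · have := e2 (s-1)
        rwa [sub_add_cancel] at this
      · simpa [add_sub_cancel_right] using e1 s
  · -- k odd : columns at even indices
    have hlodd : ¬ l % 2 = 0 := by omega
    have hwkl2 : (w k).2 = (w l).2 := by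
      simp only [hv, if_neg hk, if_neg hlodd] at hvkl
      exact Sum.inr_injective hvkl
    set R : ZMod N → Fin n := fun u => (w (k + 2*u.val + 1)).1 with hR
    set Cc : ZMod N → Fin m := fun u => (w (k + 2*u.val)).2 with hC
    have hvR : ∀ u : ZMod N, v (k + 2*u.val + 1) = Sum.inl (R u) := by
      intro u; simp only [hv, hR]; rw [if_pos (by omega)]
    have hvC : ∀ u : ZMod N, v (k + 2*u.val) = Sum.inr (Cc u) := by
      intro u; simp only [hv, hC]; rw [if_neg (by omega)]
    have injR : Function.Injective R := by
      intro u u' h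
      by_contra hne
      have hvv : u.val ≠ u'.val := fun hh => hne (ZMod.val_injective N hh)
      have b1 := hval u; have b2 := hval u'
      rcases lt_or_gt_of_ne hvv with hlt | hlt
      · exact hinj (k+2*u.val+1) (k+2*u'.val+1) (by omega) (by omega)
          (by rw [hvR u, hvR u', h])
      · exact hinj (k+2*u'.val+1) (k+2*u.val+1) (by omega) (by omega)
          (by rw [hvR u, hvR u', h])
    have injC : Function.Injective Cc := by
      intro u u' h
      by_contra hne
      have hvv : u.val ≠ u'.val := fun hh => hne (ZMod.val_injective N hh)
      have b1 := hval u; have b2 := hval u'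
      rcases lt_or_gt_of_ne hvv with hlt | hlt
      · exact hinj (k+2*u.val) (k+2*u'.val) (by omega) (by omega)
          (by rw [hvC u, hvC u', h])
      · exact hinj (k+2*u'.val) (k+2*u.val) (by omega) (by omega)
          (by rw [hvC u, hvC u', h])
    have e1 : ∀ u, P (R u) (Cc u) := by
      intro u
      have hp := hP (k + 2*u.val + 1)
      have hc : (w (k + 2*u.val + 1)).2 = (w (k + 2*u.val)).2 := (hodd _ (by omega)).1
      rw [hc] at hp
      exact hp
    have e2 : ∀ u, P (R u) (Cc (u+1)) := by
      intro u
      have hp := hP (k + 2*u.val + 2)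
      have hr : (w (k + 2*u.val + 2)).1 = (w (k + 2*u.val + 1)).1 :=
        (heven _ (by omega)).1
      rw [hr] at hp
      have hcol1 : Cc (u+1) = (w (k + 2*u.val + 2)).2 := by
        by_cases hun : u.val + 1 < N
        · have hv1 : (u+1).val = u.val + 1 := by rw [hsucc, Nat.mod_eq_of_lt hun]
          show (w (k + 2*(u+1).val)).2 = _
          rw [hv1, show k + 2*(u.val+1) = k + 2*u.val + 2 by ring]
        · have hu : u.val + 1 = N := by have := hval u; omega
          have hv0 : (u+1).val = 0 := by rw [hsucc, hu, Nat.mod_self]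
          show (w (k + 2*(u+1).val)).2 = _
          rw [hv0, show k + 2*0 = k by ring, hwkl2,
            show k + 2*u.val + 2 = l by omega]
      rw [hcol1]
      exact hp
    exact ⟨R, Cc, injR, injC, fun s => ⟨e1 s, e2 s⟩⟩

lemma no_frac {n m : ℕ} (A : Matrix (Fin n) (Fin n) ℝ) (G : Matrix (Fin n) (Fin m) ℝ)
    (η : ℝ) (hη : ∀ i k, 4 * |A i k| < η) (b : ℕ)
    (X : Matrix (Fin n) (Fin m) ℝ)
    (hX1 : ∀ i j, 0 ≤ X i j ∧ X i j ≤ 1)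
    (hX2 : ∀ i, ∑ j, X i j = 1)
    (hX3 : ∀ j, ∑ i, X i j = (b:ℝ))
    (hmin : ∀ Y : Matrix (Fin n) (Fin m) ℝ,
      ((∀ i j, 0 ≤ Y i j ∧ Y i j ≤ 1) ∧ (∀ i, ∑ j, Y i j = 1) ∧ (∀ j, ∑ i, Y i j = (b:ℝ))) →
      ((1 / 2) * ∑ i, ∑ k, A i k * (∑ j, X i j * X k j) + ∑ i, ∑ j, G i j * X i j)
          + η * ∑ i, ∑ j, Real.sqrt |X i j| ≤
        ((1 / 2) * ∑ i, ∑ k, A i k * (∑ j, Y i j * Y k j) + ∑ i, ∑ j, G i j * Y i j)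
          + η * ∑ i, ∑ j, Real.sqrt |Y i j|) :
    ∀ i j, X i j = 0 ∨ X i j = 1 := by
  classical
  by_contra hcon
  push_neg at hcon
  obtain ⟨i₀, j₀, hne0, hne1⟩ := hcon
  have h₀ : 0 < X i₀ j₀ ∧ X i₀ j₀ < 1 :=
    ⟨lt_of_le_of_ne (hX1 i₀ j₀).1 (Ne.symm hne0), lt_of_le_of_ne (hX1 i₀ j₀).2 hne1⟩
  set P : Fin n → Fin m → Prop := fun i j => 0 < X i j ∧ X i j < 1 with hPdef
  have hrow : ∀ i j, P i j → ∃ j', j' ≠ j ∧ P i j' := by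
    intro i j hp
    obtain ⟨j', h1, h2, h3⟩ := next_frac (X i) (hX1 i) 1 (by rw [Nat.cast_one]; exact hX2 i) j hp.1 hp.2
    exact ⟨j', h1, h2, h3⟩
  have hcol : ∀ i j, P i j → ∃ i', i' ≠ i ∧ P i' j := by
    intro i j hp
    obtain ⟨i', h1, h2, h3⟩ := next_frac (fun i => X i j) (fun i => hX1 i j) b (hX3 j) i hp.1 hp.2
    exact ⟨i', h1, h2, h3⟩
  obtain ⟨N, hN2, R, C, injR, injC, hfr⟩ := exists_cycle P hrow hcol i₀ j₀ h₀
  haveI : NeZero N := ⟨by omega⟩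
  haveI : Fact (1 < N) := ⟨by omega⟩
  have hCne : ∀ s, C s ≠ C (s+1) := fun s h => one_ne_zero (left_eq_add.mp (injC h))
  -- margin
  set g : ZMod N → ℝ := fun s => min (min (X (R s) (C s)) (1 - X (R s) (C s)))
      (min (X (R s) (C (s+1))) (1 - X (R s) (C (s+1)))) with hgdef
  have hgpos : ∀ s, 0 < g s := by
    intro s
    obtain ⟨⟨a1, a2⟩, ⟨b1, b2⟩⟩ := hfr s
    simp only [hgdef, lt_min_iff]
    refine ⟨⟨a1, by linarith⟩, b1, by linarith⟩
  have huniv : (Finset.univ : Finset (ZMod N)).Nonempty := ⟨0, Finset.mem_univ 0⟩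
  set m₀ : ℝ := Finset.univ.inf' huniv g with hm₀def
  have hm₀pos : 0 < m₀ := by
    rw [hm₀def, Finset.lt_inf'_iff]
    exact fun s _ => hgpos s
  have hm₀le : ∀ s, m₀ ≤ g s := fun s => Finset.inf'_le g (Finset.mem_univ s)
  have hm₀x : ∀ s, m₀ ≤ X (R s) (C s) := fun s => le_trans (hm₀le s) (by
    simp only [hgdef]
    exact le_trans (min_le_left _ _) (min_le_left _ _))
  have hm₀x' : ∀ s, X (R s) (C s) ≤ 1 - m₀ := fun s => by
    have := le_trans (hm₀le s) (le_trans (min_le_left _ _) (min_le_right _ _))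
    linarith
  have hm₀y : ∀ s, m₀ ≤ X (R s) (C (s+1)) := fun s => le_trans (hm₀le s)
    (le_trans (min_le_right _ _) (min_le_left _ _))
  have hm₀y' : ∀ s, X (R s) (C (s+1)) ≤ 1 - m₀ := fun s => by
    have := le_trans (hm₀le s) (le_trans (min_le_right _ _) (min_le_right _ _))
    linarith
  have hm₀1 : m₀ ≤ 1 := le_trans (hm₀x 0) (hX1 _ _).2
  set t : ℝ := m₀ / 16 with htdef
  have ht0 : 0 < t := by positivity
  have ht16 : t ≤ 1/16 := by rw [htdef]; linarith
  have htm : t ≤ m₀ := by rw [htdef]; linarith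
  -- the cycle direction
  set D : Matrix (Fin n) (Fin m) ℝ := fun i j => ∑ s : ZMod N,
      ((if i = R s ∧ j = C s then (1:ℝ) else 0) - (if i = R s ∧ j = C (s+1) then (1:ℝ) else 0))
    with hDdef
  have hDrow : ∀ s j, D (R s) j =
      (if j = C s then (1:ℝ) else 0) - (if j = C (s+1) then 1 else 0) := by
    intro s j
    show (∑ s' : ZMod N, ((if R s = R s' ∧ j = C s' then (1:ℝ) else 0)
        - (if R s = R s' ∧ j = C (s'+1) then (1:ℝ) else 0))) = _
    rw [Finset.sum_eq_single s]
    · congr 1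
      · by_cases hj : j = C s
        · rw [if_pos ⟨rfl, hj⟩, if_pos hj]
        · rw [if_neg (fun h => hj h.2), if_neg hj]
      · by_cases hj : j = C (s+1)
        · rw [if_pos ⟨rfl, hj⟩, if_pos hj]
        · rw [if_neg (fun h => hj h.2), if_neg hj]
    · intro s' _ hne
      rw [if_neg (fun h => hne (injR h.1).symm), if_neg (fun h => hne (injR h.1).symm)]
      ring
    · intro h
      exact absurd (Finset.mem_univ s) h
  have hD0 : ∀ i, (∀ s, i ≠ R s) → ∀ j, D i j = 0 := by
    intro i hi j
    show (∑ s' : ZMod N, _) = (0:ℝ)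
    apply Finset.sum_eq_zero
    intro s' _
    rw [if_neg (fun h => hi s' h.1), if_neg (fun h => hi s' h.1)]
    ring
  have hDval1 : ∀ s, D (R s) (C s) = 1 := by
    intro s
    rw [hDrow s, if_pos rfl, if_neg (fun h => hCne s h)]
    norm_num
  have hDval2 : ∀ s, D (R s) (C (s+1)) = -1 := by
    intro s
    rw [hDrow s, if_neg (fun h => hCne s h.symm), if_pos rfl]
    norm_num
  have hDrowsum : ∀ i, ∑ j, D i j = 0 := by
    intro i
    show (∑ j, ∑ s : ZMod N, _) = (0:ℝ)
    rw [Finset.sum_comm]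
    apply Finset.sum_eq_zero
    intro s _
    rw [Finset.sum_sub_distrib]
    have e1 : ∀ (c : Fin m), (∑ j, if i = R s ∧ j = c then (1:ℝ) else 0)
        = if i = R s then 1 else 0 := by
      intro c
      by_cases hi : i = R s
      · subst hi
        simp
      · rw [if_neg hi]
        apply Finset.sum_eq_zero
        intro j _
        rw [if_neg (fun h => hi h.1)]
    rw [e1, e1]
    ring
  have hDcolsum : ∀ j, ∑ i, D i j = 0 := by
    intro j
    show (∑ i, ∑ s : ZMod N, _) = (0:ℝ)
    rw [Finset.sum_comm]
    have e1 : ∀ (s : ZMod N) (c : Fin m), (∑ i, if i = R s ∧ j = c then (1:ℝ) else 0)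
        = if j = c then 1 else 0 := by
      intro s c
      by_cases hj : j = c
      · subst hj
        simp
      · rw [if_neg hj]
        apply Finset.sum_eq_zero
        intro i _
        rw [if_neg (fun h => hj h.2)]
    rw [Finset.sum_congr rfl (fun s (_ : s ∈ Finset.univ) => by rw [Finset.sum_sub_distrib, e1 s, e1 s])]
    rw [Finset.sum_sub_distrib]
    have : (∑ s : ZMod N, if j = C (s+1) then (1:ℝ) else 0) = ∑ s : ZMod N, if j = C s then 1 else 0 :=
      Fintype.sum_equiv (Equiv.addRight (1 : ZMod N)) _ _ (fun s => rfl)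
    rw [this]
    ring
  have htri : ∀ i j, D i j = 0 ∨ ((D i j = 1 ∨ D i j = -1) ∧ m₀ ≤ X i j ∧ X i j ≤ 1 - m₀) := by
    intro i j
    by_cases hi : ∀ s, i ≠ R s
    · exact Or.inl (hD0 i hi j)
    · push_neg at hi
      obtain ⟨s, rfl⟩ := hi
      by_cases hj1 : j = C s
      · subst hj1
        exact Or.inr ⟨Or.inl (hDval1 s), hm₀x s, hm₀x' s⟩
      · by_cases hj2 : j = C (s+1)
        · subst hj2
          exact Or.inr ⟨Or.inr (hDval2 s), hm₀y s, hm₀y' s⟩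
        · left
          rw [hDrow s, if_neg hj1, if_neg hj2]
          ring
  -- perturbed matrices
  have hfeas : ∀ ε : ℝ, |ε| ≤ t →
      ((∀ i j, 0 ≤ X i j + ε * D i j ∧ X i j + ε * D i j ≤ 1) ∧
       (∀ i, ∑ j, (X i j + ε * D i j) = 1) ∧ (∀ j, ∑ i, (X i j + ε * D i j) = (b:ℝ))) := by
    intro ε hε
    rw [abs_le] at hε
    refine ⟨?_, ?_, ?_⟩
    · intro i j
      rcases htri i j with h | ⟨h1 | h1, h2, h3⟩
      · rw [h]; constructor <;> [linarith [(hX1 i j).1]; linarith [(hX1 i j).2]]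
      · rw [h1]; constructor <;> linarith
      · rw [h1]; constructor <;> linarith
    · intro i
      rw [Finset.sum_add_distrib, ← Finset.mul_sum, hDrowsum i, hX2 i]
      ring
    · intro j
      rw [Finset.sum_add_distrib, ← Finset.mul_sum, hDcolsum j, hX3 j]
      ring
  -- perturbed matrices
  set Yp : Matrix (Fin n) (Fin m) ℝ := fun i j => X i j + t * D i j with hYpdef
  set Ym : Matrix (Fin n) (Fin m) ℝ := fun i j => X i j + (-t) * D i j with hYmdef
  have hYp : ∀ i j, Yp i j = X i j + t * D i j := fun _ _ => rfl
  have hYm : ∀ i j, Ym i j = X i j + (-t) * D i j := fun _ _ => rfl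
  have hfp := hfeas t (by rw [abs_of_nonneg ht0.le])
  have hfm := hfeas (-t) (by rw [abs_neg, abs_of_nonneg ht0.le])
  -- quadratic identity
  set QD : ℝ := ∑ i, ∑ k, A i k * (∑ j, D i j * D k j) with hQDdef
  have qid : (∑ i, ∑ k, A i k * (∑ j, Yp i j * Yp k j))
      + (∑ i, ∑ k, A i k * (∑ j, Ym i j * Ym k j))
      - 2 * (∑ i, ∑ k, A i k * (∑ j, X i j * X k j))
      = (2*t^2) * QD := by
    rw [hQDdef]
    apply sum_comb
    intro i
    apply sum_comb
    intro k
    have h := sum_comb (fun j => Yp i j * Yp k j) (fun j => Ym i j * Ym k j)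
      (fun j => X i j * X k j) (fun j => D i j * D k j) (2*t^2)
      (fun j => by simp only [hYp, hYm]; ring)
    beta_reduce at h ⊢
    linear_combination (A i k) * h
  have lid : (∑ i, ∑ j, G i j * Yp i j) + (∑ i, ∑ j, G i j * Ym i j)
      - 2 * (∑ i, ∑ j, G i j * X i j) = 0 := by
    have h := sum_comb (fun i => ∑ j, G i j * Yp i j) (fun i => ∑ j, G i j * Ym i j)
      (fun i => ∑ j, G i j * X i j) (fun _ => (0:ℝ)) 0
      (fun i => by
        have h2 := sum_comb (fun j => G i j * Yp i j) (fun j => G i j * Ym i j)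
          (fun j => G i j * X i j) (fun _ => (0:ℝ)) 0
          (fun j => by simp only [hYp, hYm]; ring)
        beta_reduce at h2 ⊢
        rw [h2]
        simp)
    beta_reduce at h
    rw [h]
    simp
  set SQ : ℝ := ∑ i, ∑ j, (Real.sqrt |Yp i j| + Real.sqrt |Ym i j| - 2 * Real.sqrt |X i j|)
    with hSQdef
  have sid : (∑ i, ∑ j, Real.sqrt |Yp i j|) + (∑ i, ∑ j, Real.sqrt |Ym i j|)
      - 2 * (∑ i, ∑ j, Real.sqrt |X i j|) = SQ := by
    rw [show SQ = 1 * SQ from (one_mul SQ).symm, hSQdef]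
    apply sum_comb
    intro i
    have h := sum_comb (fun j => Real.sqrt |Yp i j|) (fun j => Real.sqrt |Ym i j|)
      (fun j => Real.sqrt |X i j|)
      (fun j => Real.sqrt |Yp i j| + Real.sqrt |Ym i j| - 2 * Real.sqrt |X i j|) 1
      (fun j => by beta_reduce; ring)
    beta_reduce at h ⊢
    linear_combination h
  -- support sets
  set S1 : Finset (Fin n × Fin m) := Finset.univ.image (fun s : ZMod N => (R s, C s)) with hS1
  set S2 : Finset (Fin n × Fin m) := Finset.univ.image (fun s : ZMod N => (R s, C (s+1))) with hS2
  have hdisj : Disjoint S1 S2 := by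
    rw [Finset.disjoint_left]
    rintro p hp1 hp2
    rw [hS1, Finset.mem_image] at hp1
    rw [hS2, Finset.mem_image] at hp2
    obtain ⟨s, _, rfl⟩ := hp1
    obtain ⟨s', _, heq⟩ := hp2
    have h1 : R s' = R s := congrArg Prod.fst heq
    have h2 : C (s'+1) = C s := congrArg Prod.snd heq
    rw [injR h1] at h2
    exact hCne s h2.symm
  have hDoff : ∀ p : Fin n × Fin m, p ∉ S1 ∪ S2 → D p.1 p.2 = 0 := by
    intro p hp
    show (∑ s : ZMod N, _) = (0:ℝ)
    apply Finset.sum_eq_zero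
    intro s _
    have h1 : ¬(p.1 = R s ∧ p.2 = C s) := by
      intro h
      apply hp
      apply Finset.mem_union_left
      rw [hS1, Finset.mem_image]
      refine ⟨s, Finset.mem_univ s, ?_⟩
      obtain ⟨p1, p2⟩ := p
      cases h.1
      cases h.2
      rfl
    have h2 : ¬(p.1 = R s ∧ p.2 = C (s+1)) := by
      intro h
      apply hp
      apply Finset.mem_union_right
      rw [hS2, Finset.mem_image]
      refine ⟨s, Finset.mem_univ s, ?_⟩
      obtain ⟨p1, p2⟩ := p
      cases h.1
      cases h.2
      rfl
    rw [if_neg h1, if_neg h2]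
    ring
  -- SQ as a sum over the cycle
  have hSQ : SQ = ∑ s : ZMod N,
      ((Real.sqrt (X (R s) (C s) + t) + Real.sqrt (X (R s) (C s) - t)
          - 2 * Real.sqrt (X (R s) (C s)))
        + (Real.sqrt (X (R s) (C (s+1)) + t) + Real.sqrt (X (R s) (C (s+1)) - t)
          - 2 * Real.sqrt (X (R s) (C (s+1))))) := by
    rw [hSQdef]
    rw [← Finset.sum_product']
    rw [Finset.univ_product_univ]
    rw [← Finset.sum_subset (Finset.subset_univ (S1 ∪ S2)) (by
      intro p _ hp
      rw [hYp, hYm, hDoff p hp]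
      simp only [mul_zero, add_zero]
      ring)]
    rw [Finset.sum_union hdisj,
      Finset.sum_image (fun a _ b _ h => injR (congrArg Prod.fst h)),
      Finset.sum_image (fun a _ b _ h => injR (congrArg Prod.fst h)),
      ← Finset.sum_add_distrib]
    apply Finset.sum_congr rfl
    intro s _
    have c1 : Yp (R s, C s).1 (R s, C s).2 = X (R s) (C s) + t := by
      rw [hYp, hDval1]; ring
    have c2 : Ym (R s, C s).1 (R s, C s).2 = X (R s) (C s) - t := by
      rw [hYm, hDval1]; ring
    have c3 : Yp (R s, C (s+1)).1 (R s, C (s+1)).2 = X (R s) (C (s+1)) - t := by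
      rw [hYp, hDval2]; ring
    have c4 : Ym (R s, C (s+1)).1 (R s, C (s+1)).2 = X (R s) (C (s+1)) + t := by
      rw [hYm, hDval2]; ring
    rw [c1, c2, c3, c4]
    rw [abs_of_nonneg (by linarith [hm₀x s] : (0:ℝ) ≤ X (R s) (C s) + t),
      abs_of_nonneg (by linarith [hm₀x s] : (0:ℝ) ≤ X (R s) (C s) - t),
      abs_of_nonneg (by linarith [hm₀y s] : (0:ℝ) ≤ X (R s) (C (s+1)) - t),
      abs_of_nonneg (by linarith [hm₀y s] : (0:ℝ) ≤ X (R s) (C (s+1)) + t),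
      abs_of_nonneg (hX1 (R s) (C s)).1, abs_of_nonneg (hX1 (R s) (C (s+1))).1]
    ring
  -- inner products vanish off the cycle rows
  have hinner0r : ∀ (i k : Fin n), (∀ s, k ≠ R s) → (∑ j, D i j * D k j) = (0:ℝ) := by
    intro i k hk
    apply Finset.sum_eq_zero
    intro j _
    rw [hD0 k hk j, mul_zero]
  have hinner0l : ∀ (i k : Fin n), (∀ s, i ≠ R s) → (∑ j, D i j * D k j) = (0:ℝ) := by
    intro i k hi
    apply Finset.sum_eq_zero
    intro j _
    rw [hD0 i hi j, zero_mul]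
  have hinnerf : ∀ s s' : ZMod N, (∑ j, D (R s) j * D (R s') j)
      = ((if s = s' then 2 else 0) - (if s = s' + 1 then 1 else 0)
          - (if s + 1 = s' then 1 else 0) : ℝ) := by
    intro s s'
    have expand : ∀ j, D (R s) j * D (R s') j
        = (if j = C s then (1:ℝ) else 0) * (if j = C s' then 1 else 0)
          - (if j = C s then (1:ℝ) else 0) * (if j = C (s'+1) then 1 else 0)
          - ((if j = C (s+1) then (1:ℝ) else 0) * (if j = C s' then 1 else 0)
          - (if j = C (s+1) then (1:ℝ) else 0) * (if j = C (s'+1) then 1 else 0)) := by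
      intro j; rw [hDrow, hDrow]; ring
    rw [Finset.sum_congr rfl (fun j _ => expand j), Finset.sum_sub_distrib,
      Finset.sum_sub_distrib, Finset.sum_sub_distrib, delta_sum, delta_sum, delta_sum, delta_sum]
    simp only [injC.eq_iff, add_left_inj]
    split_ifs <;> ring
  have hAq : ∀ (i k : Fin n), |A i k| ≤ η/4 := fun i k => by have := hη i k; linarith
  have hT : ∀ s : ZMod N, (∑ k, A (R s) k * (∑ j, D (R s) j * D k j)) ≤ η := by
    intro s
    have hstep1 : (∑ k, A (R s) k * (∑ j, D (R s) j * D k j))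
        = ∑ k ∈ Finset.univ.image R, A (R s) k * (∑ j, D (R s) j * D k j) := by
      symm
      apply Finset.sum_subset (Finset.subset_univ _)
      intro k _ hk
      rw [hinner0r (R s) k (fun s' h => hk (Finset.mem_image.mpr ⟨s', Finset.mem_univ s', h.symm⟩)),
        mul_zero]
    rw [hstep1, Finset.sum_image (fun a _ b _ h => injR h)]
    rw [Finset.sum_congr rfl (fun s' _ => by rw [hinnerf s s'])]
    have hsplit : (∑ s' : ZMod N, A (R s) (R s') * ((if s = s' then (2:ℝ) else 0)
          - (if s = s' + 1 then 1 else 0) - (if s + 1 = s' then 1 else 0)))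
        = (∑ s' : ZMod N, if s = s' then 2 * A (R s) (R s') else 0)
          - (∑ s' : ZMod N, if s - 1 = s' then A (R s) (R s') else 0)
          - (∑ s' : ZMod N, if s + 1 = s' then A (R s) (R s') else 0) := by
      rw [← Finset.sum_sub_distrib, ← Finset.sum_sub_distrib]
      apply Finset.sum_congr rfl
      intro s' _
      have hcond : (s = s' + 1) = (s - 1 = s') := by
        apply propext
        constructor
        · intro h; rw [h, add_sub_cancel_right]
        · intro h; rw [← h, sub_add_cancel]
      simp only [hcond]
      split_ifs <;> ring
    rw [hsplit, Finset.sum_ite_eq, Finset.sum_ite_eq, Finset.sum_ite_eq,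
      if_pos (Finset.mem_univ _), if_pos (Finset.mem_univ _), if_pos (Finset.mem_univ _)]
    have h1 := abs_le.mp (hAq (R s) (R s))
    have h2 := abs_le.mp (hAq (R s) (R (s-1)))
    have h3 := abs_le.mp (hAq (R s) (R (s+1)))
    linarith
  have hQDle : QD ≤ (N:ℝ) * η := by
    rw [hQDdef]
    have houter : (∑ i, ∑ k, A i k * (∑ j, D i j * D k j))
        = ∑ s : ZMod N, ∑ k, A (R s) k * (∑ j, D (R s) j * D k j) := by
      have h1 : (∑ i, ∑ k, A i k * (∑ j, D i j * D k j))
          = ∑ i ∈ Finset.univ.image R, ∑ k, A i k * (∑ j, D i j * D k j) := by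
        symm
        apply Finset.sum_subset (Finset.subset_univ _)
        intro i _ hi
        apply Finset.sum_eq_zero
        intro k _
        rw [hinner0l i k (fun s' h => hi (Finset.mem_image.mpr ⟨s', Finset.mem_univ s', h.symm⟩)),
          mul_zero]
      rw [h1, Finset.sum_image (fun a _ b _ h => injR h)]
    rw [houter]
    calc (∑ s : ZMod N, ∑ k, A (R s) k * (∑ j, D (R s) j * D k j))
        ≤ ∑ _s : ZMod N, η := Finset.sum_le_sum (fun s _ => hT s)
      _ = (N:ℝ) * η := by
          rw [Finset.sum_const, Finset.card_univ, ZMod.card, nsmul_eq_mul]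
  have hxy1 : ∀ s : ZMod N, X (R s) (C s) + X (R s) (C (s+1)) ≤ 1 := by
    intro s
    have hpair : X (R s) (C s) + X (R s) (C (s+1)) = ∑ j ∈ ({C s, C (s+1)} : Finset (Fin m)), X (R s) j :=
      (Finset.sum_pair (hCne s)).symm
    rw [hpair, ← hX2 (R s)]
    apply Finset.sum_le_sum_of_subset_of_nonneg (Finset.subset_univ _)
    intro j _ _
    exact (hX1 _ j).1
  have hSQlt : SQ < (N:ℝ) * (-(t^2)) := by
    rw [hSQ]
    calc (∑ s : ZMod N, ((Real.sqrt (X (R s) (C s) + t) + Real.sqrt (X (R s) (C s) - t)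
          - 2 * Real.sqrt (X (R s) (C s)))
        + (Real.sqrt (X (R s) (C (s+1)) + t) + Real.sqrt (X (R s) (C (s+1)) - t)
          - 2 * Real.sqrt (X (R s) (C (s+1))))))
        < ∑ _s : ZMod N, (-(t^2)) := by
          apply Finset.sum_lt_sum_of_nonempty huniv
          intro s _
          exact pair_gain _ _ t ht0 (le_trans htm (hm₀x s)) (le_trans htm (hm₀y s)) (hxy1 s) ht16
      _ = (N:ℝ) * (-(t^2)) := by
          rw [Finset.sum_const, Finset.card_univ, ZMod.card, nsmul_eq_mul]
  -- final contradiction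
  have hη0 : 0 < η := lt_of_le_of_lt (by positivity) (hη (R 0) (R 0))
  have hmp := hmin Yp hfp
  have hmm := hmin Ym hfm
  have hfinal : t^2 * QD + η * SQ < 0 := by
    have b1 : t^2 * QD ≤ t^2 * ((N:ℝ)*η) := mul_le_mul_of_nonneg_left hQDle (sq_nonneg t)
    have b2 : η * SQ < η * ((N:ℝ) * (-(t^2))) := mul_lt_mul_of_pos_left hSQlt hη0
    have b3 : t^2 * ((N:ℝ)*η) + η * ((N:ℝ)*(-(t^2))) = 0 := by ring
    linarith
  have qid2 : (∑ i, ∑ k, A i k * (∑ j, Yp i j * Yp k j))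
      + (∑ i, ∑ k, A i k * (∑ j, Ym i j * Ym k j))
      - 2 * (∑ i, ∑ k, A i k * (∑ j, X i j * X k j)) = 2 * (t^2 * QD) := by
    rw [qid]; ring
  have sid2 : η * (∑ i, ∑ j, Real.sqrt |Yp i j|) + η * (∑ i, ∑ j, Real.sqrt |Ym i j|)
      - 2 * (η * (∑ i, ∑ j, Real.sqrt |X i j|)) = η * SQ := by
    linear_combination η * sid
  linarith [hmp, hmm, qid2, lid, sid2, hfinal]

/-- for `η > 4‖A‖_∞`, the binary problem over `F₁` and the
`ℓ_{1/2}`-regularized relaxed problem over `F₂` have the same global minimizers. -/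
theorem stmt_15 (n m : ℕ) (hn : 0 < n) (hm : 0 < m) (b : ℕ) (hb : n = m * b)
    (A : Matrix (Fin n) (Fin n) ℝ) (hA : A.PosSemidef)
    (G : Matrix (Fin n) (Fin m) ℝ) (η : ℝ)
    (hη : ∀ i k, 4 * |A i k| < η)
    (F₁ F₂ : Set (Matrix (Fin n) (Fin m) ℝ))
    (hF₁ : F₁ = {X | (∀ i j, X i j = 0 ∨ X i j = 1) ∧
      (∀ i, ∑ j, X i j = 1) ∧ (∀ j, ∑ i, X i j = (b : ℝ))})
    (hF₂ : F₂ = {X | (∀ i j, 0 ≤ X i j ∧ X i j ≤ 1) ∧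
      (∀ i, ∑ j, X i j = 1) ∧ (∀ j, ∑ i, X i j = (b : ℝ))})
    (f freg : Matrix (Fin n) (Fin m) ℝ → ℝ)
    (hf : ∀ X, f X = (1 / 2) * ∑ i, ∑ k, A i k * (∑ j, X i j * X k j)
        + ∑ i, ∑ j, G i j * X i j)
    (hfreg : ∀ X, freg X = f X + η * ∑ i, ∑ j, Real.sqrt |X i j|) :
    ∀ X, (X ∈ F₁ ∧ ∀ Y ∈ F₁, f X ≤ f Y) ↔ (X ∈ F₂ ∧ ∀ Y ∈ F₂, freg X ≤ freg Y) := by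
  classical
  have hev : ∀ (i : Fin n) (j : Fin m), Continuous (fun X : Matrix (Fin n) (Fin m) ℝ => X i j) :=
    fun i j => (continuous_apply j).comp (continuous_apply i)
  have hfregc : Continuous freg := by
    have : freg = fun X => ((1 / 2) * ∑ i, ∑ k, A i k * (∑ j, X i j * X k j)
        + ∑ i, ∑ j, G i j * X i j) + η * ∑ i, ∑ j, Real.sqrt |X i j| :=
      funext fun X => by rw [hfreg, hf]
    rw [this]
    apply Continuous.add
    · apply Continuous.add
      · apply Continuous.mul continuous_const
        apply continuous_finset_sum
        intro i _
        apply continuous_finset_sum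
        intro k _
        apply Continuous.mul continuous_const
        apply continuous_finset_sum
        intro j _
        exact (hev i j).mul (hev k j)
      · apply continuous_finset_sum
        intro i _
        apply continuous_finset_sum
        intro j _
        exact Continuous.mul continuous_const (hev i j)
    · apply Continuous.mul continuous_const
      apply continuous_finset_sum
      intro i _
      apply continuous_finset_sum
      intro j _
      exact Real.continuous_sqrt.comp (hev i j).abs
  -- compactness of F₂
  have hclosed : IsClosed F₂ := by
    rw [hF₂]
    have heq : {X : Matrix (Fin n) (Fin m) ℝ | (∀ i j, 0 ≤ X i j ∧ X i j ≤ 1) ∧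
        (∀ i, ∑ j, X i j = 1) ∧ (∀ j, ∑ i, X i j = (b : ℝ))}
        = (⋂ i, ⋂ j, {X : Matrix (Fin n) (Fin m) ℝ | 0 ≤ X i j ∧ X i j ≤ 1}) ∩
          ((⋂ i, {X : Matrix (Fin n) (Fin m) ℝ | ∑ j, X i j = 1}) ∩
           (⋂ j, {X : Matrix (Fin n) (Fin m) ℝ | ∑ i, X i j = (b : ℝ)})) := by
      ext X
      simp only [Set.mem_inter_iff, Set.mem_iInter, Set.mem_setOf_eq]
    rw [heq]
    refine IsClosed.inter ?_ (IsClosed.inter ?_ ?_)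
    · exact isClosed_iInter fun i => isClosed_iInter fun j =>
        IsClosed.inter (isClosed_le continuous_const (hev i j))
          (isClosed_le (hev i j) continuous_const)
    · exact isClosed_iInter fun i =>
        isClosed_eq (continuous_finset_sum _ fun j _ => hev i j) continuous_const
    · exact isClosed_iInter fun j =>
        isClosed_eq (continuous_finset_sum _ fun i _ => hev i j) continuous_const
  have hcomp : IsCompact F₂ := by
    have hK : IsCompact (Set.univ.pi fun _ : Fin n => Set.univ.pi fun _ : Fin m =>
        Set.Icc (0:ℝ) 1) :=
      isCompact_univ_pi fun _ => isCompact_univ_pi fun _ => isCompact_Icc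
    apply IsCompact.of_isClosed_subset hK hclosed
    intro X hX
    rw [hF₂] at hX
    intro i _ j _
    exact ⟨(hX.1 i j).1, (hX.1 i j).2⟩
  -- binary matrices have constant regularizer
  have hconst : ∀ Z : Matrix (Fin n) (Fin m) ℝ, (∀ i j, Z i j = 0 ∨ Z i j = 1) →
      (∀ i, ∑ j, Z i j = 1) → (∑ i, ∑ j, Real.sqrt |Z i j|) = (n:ℝ) := by
    intro Z hbin hrow
    have hZ : ∀ (i : Fin n) (j : Fin m), Real.sqrt |Z i j| = Z i j := by
      intro i j
      rcases hbin i j with h | h <;> rw [h] <;> simp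
    rw [Finset.sum_congr rfl (fun i _ => Finset.sum_congr rfl (fun j _ => hZ i j)),
      Finset.sum_congr rfl (fun i (_ : i ∈ Finset.univ) => hrow i)]
    simp
  have hsub : F₁ ⊆ F₂ := by
    intro Z hZ
    rw [hF₁] at hZ
    rw [hF₂]
    refine ⟨fun i j => ?_, hZ.2.1, hZ.2.2⟩
    rcases hZ.1 i j with h | h <;> rw [h] <;> norm_num
  -- minimizers of freg on F₂ are binary
  have hkey : ∀ Z, Z ∈ F₂ → (∀ Y ∈ F₂, freg Z ≤ freg Y) → Z ∈ F₁ := by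
    intro Z hZmem hZmin
    rw [hF₂] at hZmem
    obtain ⟨h1, h2, h3⟩ := hZmem
    have hbin := no_frac A G η hη b Z h1 h2 h3 (fun Y hY => by
      have := hZmin Y (by rw [hF₂]; exact hY)
      rw [hfreg, hfreg, hf, hf] at this
      exact this)
    rw [hF₁]
    exact ⟨hbin, h2, h3⟩
  intro X
  constructor
  · rintro ⟨hXF₁, hXmin⟩
    have hXF₂ : X ∈ F₂ := hsub hXF₁
    obtain ⟨Z, hZmem, hZmin⟩ := hcomp.exists_isMinOn ⟨X, hXF₂⟩ hfregc.continuousOn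
    have hZmin' : ∀ Y ∈ F₂, freg Z ≤ freg Y := fun Y hY => hZmin hY
    have hZF₁ : Z ∈ F₁ := hkey Z hZmem hZmin'
    refine ⟨hXF₂, fun Y hY => ?_⟩
    have hXeq : freg X = f X + η * (n:ℝ) := by
      rw [hfreg]
      rw [hF₁] at hXF₁
      rw [hconst X hXF₁.1 hXF₁.2.1]
    have hZeq : freg Z = f Z + η * (n:ℝ) := by
      rw [hfreg]
      rw [hF₁] at hZF₁
      rw [hconst Z hZF₁.1 hZF₁.2.1]
    have hfXZ : f X ≤ f Z := hXmin Z hZF₁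
    calc freg X = f X + η * (n:ℝ) := hXeq
      _ ≤ f Z + η * (n:ℝ) := by linarith
      _ = freg Z := hZeq.symm
      _ ≤ freg Y := hZmin' Y hY
  · rintro ⟨hXF₂, hXmin⟩
    have hXF₁ : X ∈ F₁ := hkey X hXF₂ hXmin
    refine ⟨hXF₁, fun Y hY => ?_⟩
    have h := hXmin Y (hsub hY)
    rw [hfreg, hfreg] at h
    have e1 : (∑ i, ∑ j, Real.sqrt |X i j|) = (n:ℝ) := by
      rw [hF₁] at hXF₁
      exact hconst X hXF₁.1 hXF₁.2.1
    have e2 : (∑ i, ∑ j, Real.sqrt |Y i j|) = (n:ℝ) := by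
      rw [hF₁] at hY
      exact hconst Y hY.1 hY.2.1
    rw [e1, e2] at h
    linarith
end
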